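/- arXiv:1705.05178 — 3 statements merged into one kernel-verified Lean document; each statement's English description precedes it below -/
import Mathlib

section
/- Let $X_1 \subset X_0$ be Banach spaces with continuous embedding, let $\theta \in (0,1)$ and $q \in [1,\infty]$, and let $X_\theta = (X_0, X_1)_{\theta,q}$ be the real interpolation space. If a bounded linear functional $l \in X_0'$ satisfies $|l(f)| \le C_0 \|f\|_{X_0}$ for all $f \in X_0$ and $|l(f)| \le C_1 (\varepsilon^{\theta} \|f\|_{X_\theta} + \varepsilon \|f\|_{X_1})$ for all $f \in X_1$, then there exists $C > 0$ independent of $\varepsilon$ such that $|l(f)| \le C \varepsilon^{\theta} \|f\|_{X_\theta}$ for all $f \in X_\theta$. -/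
/-!
Split `f = (f - j g) + j g` with `g` a near-minimizer of `K(ε, f)`, so that
`‖f - j g‖ + ε ‖g‖ ≤ 2 K(ε, f)`. Since `K(·, f)` is increasing, `t^{-θ} K(t, f)` is at least
`ε^{-θ} K(ε, f) / 2` on `(ε, 2ε)`, whence `K(ε, f) ≤ 4 ε^θ ‖f‖_θ`. Moreover `K(t, j g) ≤ 3 K(t, f)`
for every `t`, so `‖j g‖_θ ≤ 3 ‖f‖_θ`. The bound on `l` over `X₀` controls `l (f - j g)` and the
one over `X₁` controls `l (j g)`.
-/

open MeasureTheory Set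
open scoped ENNReal

/-- The `K`-functional of the real method of interpolation for the couple
`(X₀, X₁)`, where `X₁` is continuously embedded in `X₀` via `j`:
`K(t, f) = inf { ‖f - j g‖_{X₀} + t ‖g‖_{X₁} : g ∈ X₁ }`. -/
noncomputable def Kfunctional {X₀ X₁ : Type*} [NormedAddCommGroup X₀] [NormedSpace ℝ X₀]
    [NormedAddCommGroup X₁] [NormedSpace ℝ X₁] (j : X₁ →L[ℝ] X₀) (t : ℝ) (f : X₀) : ℝ :=
  ⨅ g : X₁, (‖f - j g‖ + t * ‖g‖)

/-- The norm of the real interpolation space `(X₀, X₁)_{θ,q}` (K-method):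
the `L^q((0,∞), dt/t)` norm of `t ↦ t^{-θ} K(t, f)`, valued in `ℝ≥0∞`;
`f` belongs to the interpolation space iff this is finite. -/
noncomputable def interpNorm {X₀ X₁ : Type*} [NormedAddCommGroup X₀] [NormedSpace ℝ X₀]
    [NormedAddCommGroup X₁] [NormedSpace ℝ X₁] (j : X₁ →L[ℝ] X₀) (θ : ℝ) (q : ℝ≥0∞)
    (f : X₀) : ℝ≥0∞ :=
  if q = ⊤ then ⨆ t ∈ Ioi (0 : ℝ), ENNReal.ofReal (t ^ (-θ) * Kfunctional j t f)
  else (∫⁻ t in Ioi (0 : ℝ), (ENNReal.ofReal (t ^ (-θ) * Kfunctional j t f)) ^ q.toReal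
      ∂(volume.withDensity fun t => ENNReal.ofReal t⁻¹)) ^ (1 / q.toReal)

section Kfunctional

variable {X₀ X₁ : Type*} [NormedAddCommGroup X₀] [NormedSpace ℝ X₀]
    [NormedAddCommGroup X₁] [NormedSpace ℝ X₁] (j : X₁ →L[ℝ] X₀)

lemma Kfunctional_le {t : ℝ} (ht : 0 ≤ t) (f : X₀) (g : X₁) :
    Kfunctional j t f ≤ ‖f - j g‖ + t * ‖g‖ :=
  ciInf_le ⟨0, by rintro _ ⟨g, rfl⟩; positivity⟩ g

lemma Kfunctional_nonneg {t : ℝ} (ht : 0 ≤ t) (f : X₀) : 0 ≤ Kfunctional j t f :=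
  le_ciInf fun _ => by positivity

lemma Kfunctional_apply_le {t : ℝ} (ht : 0 ≤ t) (g : X₁) :
    Kfunctional j t (j g) ≤ t * ‖g‖ := by
  simpa using Kfunctional_le j ht (j g) g

lemma Kfunctional_le_add_norm_sub {t : ℝ} (ht : 0 ≤ t) (f₁ f₂ : X₀) :
    Kfunctional j t f₁ ≤ Kfunctional j t f₂ + ‖f₁ - f₂‖ := by
  rw [← sub_le_iff_le_add]
  refine le_ciInf fun g => ?_
  have := norm_sub_le_norm_sub_add_norm_sub f₁ f₂ (j g)
  linarith [Kfunctional_le j ht f₁ g]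

lemma Kfunctional_mono {s t : ℝ} (hs : 0 ≤ s) (hst : s ≤ t) (f : X₀) :
    Kfunctional j s f ≤ Kfunctional j t f :=
  le_ciInf fun g => (Kfunctional_le j hs f g).trans (by gcongr)

lemma div_mul_Kfunctional_le {s t : ℝ} (hs : 0 < s) (hst : s ≤ t) (f : X₀) :
    s / t * Kfunctional j t f ≤ Kfunctional j s f := by
  have ht : 0 < t := hs.trans_le hst
  refine le_ciInf fun g => ?_
  calc s / t * Kfunctional j t f ≤ s / t * (‖f - j g‖ + t * ‖g‖) := by
        gcongr; exact Kfunctional_le j ht.le f g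
    _ = s / t * ‖f - j g‖ + s * ‖g‖ := by field_simp
    _ ≤ ‖f - j g‖ + s * ‖g‖ := by
        gcongr; exact mul_le_of_le_one_left (norm_nonneg _) ((div_le_one ht).mpr hst)

lemma norm_le_Kfunctional {t : ℝ} (ht : 0 < t) (f : X₀) :
    ‖f‖ ≤ (1 + ‖j‖ / t) * Kfunctional j t f := by
  rw [← div_le_iff₀' (by positivity)]
  refine le_ciInf fun g => ?_
  rw [div_le_iff₀' (by positivity)]
  have hjg : ‖j g‖ ≤ ‖j‖ * ‖g‖ := j.le_opNorm g
  have hexp : (1 + ‖j‖ / t) * (‖f - j g‖ + t * ‖g‖)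
      = ‖f - j g‖ + ‖j‖ * ‖g‖ + (‖j‖ / t * ‖f - j g‖ + t * ‖g‖) := by
    field_simp; ring
  have htri := norm_le_norm_sub_add f (j g)
  rw [hexp]
  linarith [show 0 ≤ ‖j‖ / t * ‖f - j g‖ + t * ‖g‖ by positivity]

/-- When `K(t, f) = 0` the near-minimizer is `0`, because then `f = 0`. -/
lemma exists_norm_sub_add_le_two_mul_Kfunctional {t : ℝ} (ht : 0 < t) (f : X₀) :
    ∃ g : X₁, ‖f - j g‖ + t * ‖g‖ ≤ 2 * Kfunctional j t f := by
  rcases (Kfunctional_nonneg j ht.le f).eq_or_lt with hK | hK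
  · have hf : f = 0 :=
      norm_le_zero_iff.mp (by simpa [← hK] using norm_le_Kfunctional j ht f)
    exact ⟨0, by simpa [hf] using Kfunctional_nonneg j ht.le f⟩
  · obtain ⟨g, hg⟩ :=
      exists_lt_of_ciInf_lt (by linarith : Kfunctional j t f < 2 * Kfunctional j t f)
    exact ⟨g, hg.le⟩

/-- Below `ε` use `K(t, j g) ≤ t ‖g‖`, above `ε` use `K(t, j g) ≤ K(t, f) + ‖f - j g‖`. -/
lemma Kfunctional_apply_le_three_mul {ε t : ℝ} (hε : 0 < ε) (ht : 0 < t) {f : X₀} {g : X₁}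
    (hg : ‖f - j g‖ + ε * ‖g‖ ≤ 2 * Kfunctional j ε f) :
    Kfunctional j t (j g) ≤ 3 * Kfunctional j t f := by
  have hKt := Kfunctional_nonneg j ht.le f
  rcases le_total t ε with htε | hεt
  · have hscale := div_mul_Kfunctional_le j ht htε f
    calc Kfunctional j t (j g) ≤ t * ‖g‖ := Kfunctional_apply_le j ht.le g
      _ = t / ε * (ε * ‖g‖) := by field_simp
      _ ≤ t / ε * (2 * Kfunctional j ε f) := by
          gcongr ?_ * ?_
          linarith [norm_nonneg (f - j g)]
      _ ≤ 3 * Kfunctional j t f := by linarith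
  · have hmono := Kfunctional_mono j hε.le hεt f
    have hsub := Kfunctional_le_add_norm_sub j ht.le (j g) f
    rw [norm_sub_rev] at hsub
    nlinarith [mul_nonneg hε.le (norm_nonneg g)]

end Kfunctional

lemma half_le_withDensity_inv_Ioo {ε : ℝ} (hε : 0 < ε) :
    2⁻¹ ≤ volume.withDensity (fun t : ℝ => ENNReal.ofReal t⁻¹) (Ioo ε (2 * ε)) := by
  rw [withDensity_apply _ measurableSet_Ioo]
  calc (2⁻¹ : ℝ≥0∞) = ∫⁻ _ in Ioo ε (2 * ε), ENNReal.ofReal (2 * ε)⁻¹ := by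
        rw [setLIntegral_const, Real.volume_Ioo, ← ENNReal.ofReal_mul (by positivity),
          show (2 * ε)⁻¹ * (2 * ε - ε) = 2⁻¹ by field_simp; ring,
          ENNReal.ofReal_inv_of_pos two_pos, ENNReal.ofReal_ofNat]
    _ ≤ _ := setLIntegral_mono' measurableSet_Ioo fun t ht =>
        ENNReal.ofReal_le_ofReal (inv_anti₀ (hε.trans ht.1) ht.2.le)

/-- The `L^p(dt/t)` norm over `(0, ∞)` controls the infimum over any interval `(ε, 2ε)`,
which has `dt/t`-measure `log 2 ≥ 1/2`. -/
lemma le_two_mul_setLIntegral_rpow {φ : ℝ → ℝ≥0∞} {a : ℝ≥0∞} {ε p : ℝ} (hε : 0 < ε)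
    (hp : 1 ≤ p) (h : ∀ t ∈ Ioo ε (2 * ε), a ≤ φ t) :
    a ≤ 2 * (∫⁻ t in Ioi 0, φ t ^ p
      ∂(volume.withDensity fun t => ENNReal.ofReal t⁻¹)) ^ (1 / p) := by
  set μ := volume.withDensity fun t : ℝ => ENNReal.ofReal t⁻¹
  have hmass : a ^ p * 2⁻¹ ≤ ∫⁻ t in Ioi 0, φ t ^ p ∂μ :=
    calc a ^ p * 2⁻¹ ≤ a ^ p * μ (Ioo ε (2 * ε)) := by
          gcongr; exact half_le_withDensity_inv_Ioo hε
      _ = ∫⁻ _ in Ioo ε (2 * ε), a ^ p ∂μ := (setLIntegral_const _ _).symm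
      _ ≤ ∫⁻ t in Ioo ε (2 * ε), φ t ^ p ∂μ := setLIntegral_mono' measurableSet_Ioo
          fun t ht => ENNReal.rpow_le_rpow (h t ht) (by linarith)
      _ ≤ ∫⁻ t in Ioi 0, φ t ^ p ∂μ := lintegral_mono_set fun t ht => hε.trans ht.1
  calc a = 2 * (a * 2⁻¹) := by
        rw [mul_comm a, ← mul_assoc, ENNReal.mul_inv_cancel two_ne_zero ENNReal.ofNat_ne_top,
          one_mul]
    _ ≤ 2 * (a * 2⁻¹ ^ (1 / p)) := by
        gcongr
        nth_rewrite 1 [← ENNReal.rpow_one 2⁻¹]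
        exact ENNReal.rpow_le_rpow_of_exponent_ge (by norm_num)
          ((div_le_one (by linarith)).mpr hp)
    _ = 2 * (a ^ p * 2⁻¹) ^ (1 / p) := by
        rw [ENNReal.mul_rpow_of_nonneg _ _ (by positivity), ← ENNReal.rpow_mul,
          mul_one_div_cancel (by linarith), ENNReal.rpow_one]
    _ ≤ _ := by gcongr

section interpNorm

variable {X₀ X₁ : Type*} [NormedAddCommGroup X₀] [NormedSpace ℝ X₀]
    [NormedAddCommGroup X₁] [NormedSpace ℝ X₁] (j : X₁ →L[ℝ] X₀)

lemma interpNorm_le_of_Kfunctional_le {θ : ℝ} {q : ℝ≥0∞} (hq : q ≠ 0) {c : ℝ} (hc : 0 ≤ c)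
    {f₁ f₂ : X₀} (h : ∀ t > 0, Kfunctional j t f₁ ≤ c * Kfunctional j t f₂) :
    interpNorm j θ q f₁ ≤ ENNReal.ofReal c * interpNorm j θ q f₂ := by
  have hpt : ∀ t ∈ Ioi (0 : ℝ), ENNReal.ofReal (t ^ (-θ) * Kfunctional j t f₁) ≤
      ENNReal.ofReal c * ENNReal.ofReal (t ^ (-θ) * Kfunctional j t f₂) := fun t ht => by
    rw [← ENNReal.ofReal_mul hc, mul_left_comm]
    exact ENNReal.ofReal_le_ofReal
      (mul_le_mul_of_nonneg_left (h t ht) (Real.rpow_nonneg (le_of_lt ht) _))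
  unfold interpNorm
  split_ifs with hqt
  · exact iSup₂_le fun t ht => (hpt t ht).trans
      (mul_le_mul_right (le_iSup₂ (f := fun t _ =>
        ENNReal.ofReal (t ^ (-θ) * Kfunctional j t f₂)) t ht) _)
  · have hp : 0 < q.toReal := ENNReal.toReal_pos hq hqt
    calc (∫⁻ t in Ioi 0, ENNReal.ofReal (t ^ (-θ) * Kfunctional j t f₁) ^ q.toReal
          ∂volume.withDensity fun t => ENNReal.ofReal t⁻¹) ^ (1 / q.toReal)
        ≤ (ENNReal.ofReal c ^ q.toReal * ∫⁻ t in Ioi 0,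
            ENNReal.ofReal (t ^ (-θ) * Kfunctional j t f₂) ^ q.toReal
          ∂volume.withDensity fun t => ENNReal.ofReal t⁻¹) ^ (1 / q.toReal) := by
          rw [← lintegral_const_mul' _ _
            (ENNReal.rpow_ne_top_of_nonneg hp.le ENNReal.ofReal_ne_top)]
          gcongr ?_ ^ _
          refine setLIntegral_mono' measurableSet_Ioi fun t ht => ?_
          rw [← ENNReal.mul_rpow_of_nonneg _ _ hp.le]
          exact ENNReal.rpow_le_rpow (hpt t ht) hp.le
      _ = _ := by
          rw [ENNReal.mul_rpow_of_nonneg _ _ (by positivity), ← ENNReal.rpow_mul,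
            mul_one_div_cancel hp.ne', ENNReal.rpow_one]

lemma ofReal_rpow_neg_mul_Kfunctional_le {θ : ℝ} (hθ₀ : 0 ≤ θ) (hθ₁ : θ ≤ 1) {q : ℝ≥0∞}
    (hq : 1 ≤ q) {ε : ℝ} (hε : 0 < ε) (f : X₀) :
    ENNReal.ofReal (ε ^ (-θ) * Kfunctional j ε f) ≤ 4 * interpNorm j θ q f := by
  unfold interpNorm
  split_ifs with hqt
  · exact (le_iSup₂ (f := fun t _ => ENNReal.ofReal (t ^ (-θ) * Kfunctional j t f)) ε
      hε).trans (le_mul_of_one_le_left' (by norm_num))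
  · have hp : 1 ≤ q.toReal := by
      simpa using ENNReal.toReal_mono hqt hq
    have hKε := Kfunctional_nonneg j hε.le f
    have htwo : ENNReal.ofReal (ε ^ (-θ) * Kfunctional j ε f) ≤
        2 * ENNReal.ofReal ((2 * ε) ^ (-θ) * Kfunctional j ε f) := by
      rw [← ENNReal.ofReal_ofNat 2, ← ENNReal.ofReal_mul (by norm_num)]
      refine ENNReal.ofReal_le_ofReal ?_
      have h2θ : (2 : ℝ)⁻¹ ≤ 2 ^ (-θ) := by
        simpa [Real.rpow_neg_one] using
          Real.rpow_le_rpow_of_exponent_le (x := 2) (by norm_num) (neg_le_neg hθ₁)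
      rw [Real.mul_rpow (by norm_num) hε.le]
      have := Real.rpow_nonneg hε.le (-θ)
      nlinarith [mul_nonneg this hKε]
    refine htwo.trans ?_
    rw [show (4 : ℝ≥0∞) = 2 * 2 by norm_num, mul_assoc]
    gcongr
    refine le_two_mul_setLIntegral_rpow hε hp fun t ht => ENNReal.ofReal_le_ofReal ?_
    exact mul_le_mul
      (Real.rpow_le_rpow_of_nonpos (hε.trans ht.1) ht.2.le (neg_nonpos.mpr hθ₀))
      (Kfunctional_mono j hε.le ht.1.le f) hKε (Real.rpow_nonneg (hε.trans ht.1).le _)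

lemma Kfunctional_le_interpNorm {θ : ℝ} (hθ₀ : 0 ≤ θ) (hθ₁ : θ ≤ 1) {q : ℝ≥0∞}
    (hq : 1 ≤ q) {ε : ℝ} (hε : 0 < ε) {f : X₀} (hf : interpNorm j θ q f ≠ ⊤) :
    Kfunctional j ε f ≤ 4 * ε ^ θ * (interpNorm j θ q f).toReal := by
  have h := (ENNReal.ofReal_le_iff_le_toReal (ENNReal.mul_ne_top ENNReal.ofNat_ne_top hf)).mp
    (ofReal_rpow_neg_mul_Kfunctional_le j hθ₀ hθ₁ hq hε f)
  rw [ENNReal.toReal_mul, ENNReal.toReal_ofNat, Real.rpow_neg hε.le,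
    inv_mul_le_iff₀ (Real.rpow_pos_of_pos hε θ)] at h
  linarith

end interpNorm

theorem stmt_0_general {X₀ X₁ : Type*} [NormedAddCommGroup X₀] [NormedSpace ℝ X₀]
    [NormedAddCommGroup X₁] [NormedSpace ℝ X₁]
    (j : X₁ →L[ℝ] X₀)
    (θ : ℝ) (hθ : θ ∈ Set.Ioo (0 : ℝ) 1) (q : ℝ≥0∞) (hq : 1 ≤ q)
    (l : X₀ →L[ℝ] ℝ) (C₀ C₁ : ℝ) (hC₀ : 0 < C₀) (hC₁ : 0 < C₁)
    (hl₀ : ∀ f : X₀, |l f| ≤ C₀ * ‖f‖) :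
    ∃ C > 0, ∀ ε : ℝ, 0 < ε →
      (∀ g : X₁, |l (j g)| ≤
          C₁ * (ε ^ θ * (interpNorm j θ q (j g)).toReal + ε * ‖g‖)) →
      ∀ f : X₀, interpNorm j θ q f ≠ ⊤ →
        |l f| ≤ C * ε ^ θ * (interpNorm j θ q f).toReal := by
  refine ⟨8 * C₀ + 11 * C₁, by positivity, fun ε hε hl₁ f hf => ?_⟩
  set N := (interpNorm j θ q f).toReal
  obtain ⟨g, hg⟩ := exists_norm_sub_add_le_two_mul_Kfunctional j hε f
  have hK : Kfunctional j ε f ≤ 4 * ε ^ θ * N :=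
    Kfunctional_le_interpNorm j hθ.1.le hθ.2.le hq hε hf
  have hNg : (interpNorm j θ q (j g)).toReal ≤ 3 * N := by
    have h := interpNorm_le_of_Kfunctional_le j (θ := θ) (one_pos.trans_le hq).ne'
      (by norm_num : (0 : ℝ) ≤ 3) fun t ht => Kfunctional_apply_le_three_mul j hε ht hg
    simpa [ENNReal.toReal_mul] using
      ENNReal.toReal_mono (ENNReal.mul_ne_top ENNReal.ofReal_ne_top hf) h
  have hfg : ‖f - j g‖ ≤ 8 * ε ^ θ * N := by nlinarith [mul_nonneg hε.le (norm_nonneg g)]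
  have hεg : ε * ‖g‖ ≤ 8 * ε ^ θ * N := by nlinarith [norm_nonneg (f - j g)]
  have hεθ := Real.rpow_pos_of_pos hε θ
  calc |l f| = |l (f - j g) + l (j g)| := by rw [← map_add, sub_add_cancel]
    _ ≤ C₀ * ‖f - j g‖ + C₁ * (ε ^ θ * (interpNorm j θ q (j g)).toReal + ε * ‖g‖) :=
        (abs_add_le _ _).trans (add_le_add (hl₀ _) (hl₁ g))
    _ ≤ C₀ * (8 * ε ^ θ * N) + C₁ * (ε ^ θ * (3 * N) + 8 * ε ^ θ * N) := by
        gcongr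
    _ = (8 * C₀ + 11 * C₁) * ε ^ θ * N := by ring

/-- Single-parameter functional interpolation lemma: if a bounded functional
`l ∈ X₀'` satisfies `|l f| ≤ C₀ ‖f‖_{X₀}` on `X₀` and
`|l f| ≤ C₁ (ε^θ ‖f‖_{X_θ} + ε ‖f‖_{X₁})` on `X₁`, then there is `C` independent
of `ε` with `|l f| ≤ C ε^θ ‖f‖_{X_θ}` for every `f` in `X_θ = (X₀,X₁)_{θ,q}`. -/
theorem stmt_0 {X₀ X₁ : Type*} [NormedAddCommGroup X₀] [NormedSpace ℝ X₀]
    [NormedAddCommGroup X₁] [NormedSpace ℝ X₁]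
    (j : X₁ →L[ℝ] X₀) (hj : Function.Injective j)
    (θ : ℝ) (hθ : θ ∈ Set.Ioo (0 : ℝ) 1) (q : ℝ≥0∞) (hq : 1 ≤ q)
    (l : X₀ →L[ℝ] ℝ) (C₀ C₁ : ℝ) (hC₀ : 0 < C₀) (hC₁ : 0 < C₁)
    (hl₀ : ∀ f : X₀, |l f| ≤ C₀ * ‖f‖) :
    ∃ C > 0, ∀ ε : ℝ, 0 < ε →
      (∀ g : X₁, |l (j g)| ≤
          C₁ * (ε ^ θ * (interpNorm j θ q (j g)).toReal + ε * ‖g‖)) →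
      ∀ f : X₀, interpNorm j θ q f ≠ ⊤ →
        |l f| ≤ C * ε ^ θ * (interpNorm j θ q f).toReal :=
  stmt_0_general j θ hθ q hq l C₀ C₁ hC₀ hC₁ hl₀
end

section
/- Let $X_1 \subset X_0$ be Banach spaces with continuous embedding, $0 < \theta_1 < \theta_2 < \cdots < \theta_n < 1$, $q \in [1,\infty]$, and $X_\theta = (X_0,X_1)_{\theta,q}$. If $l \in X_0'$ satisfies $|l(f)| \le C_0 \|f\|_{X_0}$ for all $f \in X_0$ and $|l(f)| \le C_1 (\sum_{i=1}^n \varepsilon^{\theta_i} \|f\|_{X_{\theta_i}} + \varepsilon \|f\|_{X_1})$ for all $f \in X_1$, then there is $C$ independent of $\varepsilon$ with $|l(f)| \le C \varepsilon^{\theta_1} \|f\|_{X_{\theta_1}}$ for all $f \in X_{\theta_1}$. -/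
open MeasureTheory Set
open scoped ENNReal

/-!
Let `M = ‖f‖_{θ₁,q}`. Since `K(·, f)` is nondecreasing, `t^{-θ₁} K(t, f) ≤ 4M` for every `t > 0`,
so for each `ε` there is `g ∈ X₁` with `‖f - g‖_{X₀} + ε ‖g‖_{X₁} ≤ 5 M ε^{θ₁}`. Then
`|l (f - g)| ≤ 5 C₀ M ε^{θ₁}`, and `|l g|` is controlled by the hypothesis once
`ε^{θᵢ} ‖g‖_{θᵢ} ≲ M ε^{θ₁}` for every `i`. For `θᵢ > θ₁` this comes from the pointwise bound
`K(t, g) ≤ 9 M ε^{θ₁} min (t/ε) ((t/ε)^{θ₁})`: after the weight `t^{-θᵢ}` it decays like a power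
of `t/ε` on both sides of `ε`, so its `L^q(dt/t)` norm is `≲ M ε^{θ₁ - θᵢ}`. For `θᵢ = θ₁` it
comes from `K(t, g) ≤ K(t, f) + 5 M ε^{θ₁} min 1 (t/ε)` and the triangle inequality in
`L^q(dt/t)`.
-/

namespace Kfunctional

variable {X₀ X₁ : Type*} [NormedAddCommGroup X₀] [NormedSpace ℝ X₀]
    [NormedAddCommGroup X₁] [NormedSpace ℝ X₁] (j : X₁ →L[ℝ] X₀) {t : ℝ}

lemma bddBelow_range (ht : 0 ≤ t) (f : X₀) :
    BddBelow (range fun g : X₁ => ‖f - j g‖ + t * ‖g‖) :=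
  ⟨0, by rintro _ ⟨g, rfl⟩; positivity⟩

lemma nonneg (ht : 0 ≤ t) (f : X₀) : 0 ≤ Kfunctional j t f :=
  le_ciInf fun _ => by positivity

lemma le_norm_sub_add (ht : 0 ≤ t) (f : X₀) (g : X₁) :
    Kfunctional j t f ≤ ‖f - j g‖ + t * ‖g‖ :=
  ciInf_le (bddBelow_range j ht f) g

lemma map_le (ht : 0 ≤ t) (g : X₁) : Kfunctional j t (j g) ≤ t * ‖g‖ := by
  simpa using le_norm_sub_add j ht (j g) g

lemma le_add_norm_sub (ht : 0 ≤ t) (f f' : X₀) :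
    Kfunctional j t f' ≤ Kfunctional j t f + ‖f' - f‖ := by
  rw [← sub_le_iff_le_add]
  refine le_ciInf fun g => ?_
  have := le_norm_sub_add j ht f' g
  have := norm_sub_le_norm_sub_add_norm_sub f' f (j g)
  linarith

lemma monotoneOn (f : X₀) : MonotoneOn (fun t => Kfunctional j t f) (Ici 0) :=
  fun s hs t _ hst => le_ciInf fun g =>
    (le_norm_sub_add j hs f g).trans (by gcongr)

lemma exists_lt_add (f : X₀) {δ : ℝ} (hδ : 0 < δ) :
    ∃ g : X₁, ‖f - j g‖ + t * ‖g‖ < Kfunctional j t f + δ :=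
  exists_lt_of_ciInf_lt (lt_add_of_pos_right _ hδ)

end Kfunctional

section HaarIntegrals

variable {r c : ℝ}

lemma inv_mul_div_rpow (hr : 0 < r) {t : ℝ} (ht : 0 < t) (c : ℝ) :
    t⁻¹ * (t / r) ^ c = r ^ (-c) * t ^ (c - 1) := by
  rw [Real.div_rpow ht.le hr.le, Real.rpow_sub_one ht.ne', Real.rpow_neg hr.le]
  field_simp

lemma lintegral_Ioc_div_rpow (hr : 0 < r) (hc : 0 < c) :
    ∫⁻ t in Ioc 0 r, ENNReal.ofReal ((t / r) ^ c)
      ∂(volume.withDensity fun t => ENNReal.ofReal t⁻¹) = ENNReal.ofReal c⁻¹ := by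
  have hint : IntegrableOn (fun t : ℝ => r ^ (-c) * t ^ (c - 1)) (Ioc 0 r) := by
    refine Integrable.const_mul ?_ _
    exact (intervalIntegrable_iff_integrableOn_Ioc_of_le hr.le).1
      (intervalIntegral.intervalIntegrable_rpow' (by linarith))
  rw [setLIntegral_withDensity_eq_setLIntegral_mul _ (by fun_prop) (by fun_prop) measurableSet_Ioc,
    setLIntegral_congr_fun measurableSet_Ioc fun t ht => by
      rw [Pi.mul_apply, ← ENNReal.ofReal_mul (inv_nonneg.2 ht.1.le), inv_mul_div_rpow hr ht.1],
    ← ofReal_integral_eq_lintegral_ofReal hint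
      (ae_restrict_of_forall_mem measurableSet_Ioc fun t ht => by positivity [ht.1.le]),
    integral_const_mul, ← intervalIntegral.integral_of_le hr.le,
    integral_rpow (Or.inl (by linarith)), sub_add_cancel, Real.zero_rpow hc.ne', sub_zero,
    mul_div_assoc', ← Real.rpow_add hr, neg_add_cancel, Real.rpow_zero, one_div]

lemma lintegral_Ioi_div_rpow_neg (hr : 0 < r) (hc : 0 < c) :
    ∫⁻ t in Ioi r, ENNReal.ofReal ((t / r) ^ (-c))
      ∂(volume.withDensity fun t => ENNReal.ofReal t⁻¹) = ENNReal.ofReal c⁻¹ := by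
  have hint : IntegrableOn (fun t : ℝ => r ^ (-(-c)) * t ^ (-c - 1)) (Ioi r) :=
    (integrableOn_Ioi_rpow_of_lt (by linarith) hr).const_mul _
  rw [setLIntegral_withDensity_eq_setLIntegral_mul _ (by fun_prop) (by fun_prop) measurableSet_Ioi,
    setLIntegral_congr_fun measurableSet_Ioi fun t ht => by
      rw [Pi.mul_apply, ← ENNReal.ofReal_mul (inv_nonneg.2 (hr.trans ht).le),
        inv_mul_div_rpow hr (hr.trans ht)],
    ← ofReal_integral_eq_lintegral_ofReal hint
      (ae_restrict_of_forall_mem measurableSet_Ioi fun t ht => by positivity [(hr.trans ht).le]),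
    integral_const_mul, integral_Ioi_rpow_of_lt (by linarith) hr, sub_add_cancel, neg_neg,
    neg_div, div_neg, neg_neg, mul_div_assoc', ← Real.rpow_add hr, add_neg_cancel,
    Real.rpow_zero, one_div]

lemma ofReal_inv_two_le_withDensity_Ioc {t : ℝ} (ht : 0 < t) :
    ENNReal.ofReal 2⁻¹ ≤ (volume.withDensity fun s => ENNReal.ofReal s⁻¹) (Ioc t (2 * t)) := by
  rw [withDensity_apply _ measurableSet_Ioc]
  calc ENNReal.ofReal 2⁻¹ = ∫⁻ _ in Ioc t (2 * t), ENNReal.ofReal (2 * t)⁻¹ := by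
        rw [setLIntegral_const, Real.volume_Ioc, ← ENNReal.ofReal_mul (by positivity)]
        congr 1
        field_simp
        ring
    _ ≤ _ := setLIntegral_mono (by fun_prop) fun s hs =>
        ENNReal.ofReal_le_ofReal (inv_anti₀ (ht.trans hs.1) hs.2)

end HaarIntegrals

noncomputable def weightedNorm (θ : ℝ) (q : ℝ≥0∞) (G : ℝ → ℝ) : ℝ≥0∞ :=
  if q = ⊤ then ⨆ t ∈ Ioi (0 : ℝ), ENNReal.ofReal (t ^ (-θ) * G t)
  else (∫⁻ t in Ioi (0 : ℝ), (ENNReal.ofReal (t ^ (-θ) * G t)) ^ q.toReal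
      ∂(volume.withDensity fun t => ENNReal.ofReal t⁻¹)) ^ (1 / q.toReal)

lemma interpNorm_eq_weightedNorm {X₀ X₁ : Type*} [NormedAddCommGroup X₀] [NormedSpace ℝ X₀]
    [NormedAddCommGroup X₁] [NormedSpace ℝ X₁] (j : X₁ →L[ℝ] X₀) (θ : ℝ) (q : ℝ≥0∞) (f : X₀) :
    interpNorm j θ q f = weightedNorm θ q (fun t => Kfunctional j t f) := rfl

lemma rpow_neg_mul_le_two_mul {θ t x : ℝ} (hθ : θ ≤ 1) (ht : 0 < t) (hx : 0 ≤ x) :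
    t ^ (-θ) * x ≤ 2 * ((2 * t) ^ (-θ) * x) := by
  have h2 : (1 : ℝ) ≤ 2 * 2 ^ (-θ) := by
    rw [Real.rpow_neg zero_le_two, ← div_eq_mul_inv, one_le_div (by positivity)]
    simpa using Real.rpow_le_rpow_of_exponent_le one_le_two hθ
  rw [Real.mul_rpow zero_le_two ht.le]
  nlinarith [mul_nonneg (Real.rpow_nonneg ht.le (-θ)) hx]

namespace weightedNorm

variable {θ : ℝ} {q : ℝ≥0∞} {G G₁ G₂ : ℝ → ℝ}

lemma mono (h : ∀ t ∈ Ioi (0 : ℝ), G₁ t ≤ G₂ t) : weightedNorm θ q G₁ ≤ weightedNorm θ q G₂ := by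
  have key : ∀ t ∈ Ioi (0 : ℝ),
      ENNReal.ofReal (t ^ (-θ) * G₁ t) ≤ ENNReal.ofReal (t ^ (-θ) * G₂ t) := fun t ht =>
    ENNReal.ofReal_le_ofReal (mul_le_mul_of_nonneg_left (h t ht) (by positivity [ht.out.le]))
  unfold weightedNorm
  split_ifs
  · exact iSup₂_mono key
  · gcongr ?_ ^ _
    exact setLIntegral_mono_ae' measurableSet_Ioi (Filter.Eventually.of_forall fun t ht =>
      ENNReal.rpow_le_rpow (key t ht) ENNReal.toReal_nonneg)

lemma add_le (hq : 1 ≤ q) (h₁ : AEMeasurable G₁ (volume.restrict (Ioi 0)))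
    (h₂ : AEMeasurable G₂ (volume.restrict (Ioi 0))) :
    weightedNorm θ q (fun t => G₁ t + G₂ t) ≤ weightedNorm θ q G₁ + weightedNorm θ q G₂ := by
  have key : ∀ t : ℝ, ENNReal.ofReal (t ^ (-θ) * (G₁ t + G₂ t)) ≤
      ENNReal.ofReal (t ^ (-θ) * G₁ t) + ENNReal.ofReal (t ^ (-θ) * G₂ t) := fun t => by
    rw [mul_add]; exact ENNReal.ofReal_add_le
  unfold weightedNorm
  split_ifs with hq_top
  · exact iSup₂_le fun t ht => (key t).trans (add_le_add
      (le_iSup₂ (f := fun t (_ : t ∈ Ioi (0 : ℝ)) => ENNReal.ofReal (t ^ (-θ) * G₁ t)) t ht)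
      (le_iSup₂ (f := fun t (_ : t ∈ Ioi (0 : ℝ)) => ENNReal.ofReal (t ^ (-θ) * G₂ t)) t ht))
  · have hac : (volume.withDensity fun t => ENNReal.ofReal t⁻¹).restrict (Ioi (0 : ℝ)) ≪
        volume.restrict (Ioi 0) := (withDensity_absolutelyContinuous _ _).restrict _
    calc _ ≤ (∫⁻ t in Ioi (0 : ℝ), (ENNReal.ofReal (t ^ (-θ) * G₁ t) +
          ENNReal.ofReal (t ^ (-θ) * G₂ t)) ^ q.toReal
          ∂(volume.withDensity fun t => ENNReal.ofReal t⁻¹)) ^ (1 / q.toReal) := by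
          gcongr with t
          exact key t
      _ ≤ _ := ENNReal.lintegral_Lp_add_le (by fun_prop (disch := exact h₁.mono_ac hac))
          (by fun_prop (disch := exact h₂.mono_ac hac))
          (by simpa using ENNReal.toReal_mono hq_top hq)

lemma lintegral_rpow_le_of_decay {a b r D p : ℝ} (ha : 0 < a) (hb : 0 < b) (hr : 0 < r)
    (hD : 0 ≤ D) (hp : 0 < p) (h₀ : ∀ t ∈ Ioc 0 r, t ^ (-θ) * G t ≤ D * (t / r) ^ a)
    (h₁ : ∀ t ∈ Ioi r, t ^ (-θ) * G t ≤ D * (t / r) ^ (-b)) :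
    ∫⁻ t in Ioi 0, ENNReal.ofReal (t ^ (-θ) * G t) ^ p
      ∂(volume.withDensity fun t => ENNReal.ofReal t⁻¹) ≤
        ENNReal.ofReal (D ^ p) * ENNReal.ofReal ((a * p)⁻¹ + (b * p)⁻¹) := by
  have hpow : ∀ {t c : ℝ}, 0 < t → t ^ (-θ) * G t ≤ D * (t / r) ^ c →
      ENNReal.ofReal (t ^ (-θ) * G t) ^ p ≤
        ENNReal.ofReal (D ^ p) * ENNReal.ofReal ((t / r) ^ (c * p)) := fun {t c} ht h => by
    rw [← ENNReal.ofReal_mul (by positivity), Real.rpow_mul (by positivity),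
      ← Real.mul_rpow hD (by positivity), ← ENNReal.ofReal_rpow_of_nonneg (by positivity) hp.le]
    gcongr
  rw [← Ioc_union_Ioi_eq_Ioi hr.le, lintegral_union measurableSet_Ioi Ioc_disjoint_Ioi_same,
    ENNReal.ofReal_add (by positivity) (by positivity), mul_add]
  gcongr ?_ + ?_
  · calc _ ≤ ∫⁻ t in Ioc 0 r, ENNReal.ofReal (D ^ p) * ENNReal.ofReal ((t / r) ^ (a * p))
          ∂(volume.withDensity fun t => ENNReal.ofReal t⁻¹) :=
          setLIntegral_mono_ae' measurableSet_Ioc (Filter.Eventually.of_forall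
            fun t ht => hpow ht.1 (h₀ t ht))
      _ = _ := by
          rw [lintegral_const_mul _ (by fun_prop), lintegral_Ioc_div_rpow hr (by positivity)]
  · calc _ ≤ ∫⁻ t in Ioi r, ENNReal.ofReal (D ^ p) * ENNReal.ofReal ((t / r) ^ (-(b * p)))
          ∂(volume.withDensity fun t => ENNReal.ofReal t⁻¹) :=
          setLIntegral_mono_ae' measurableSet_Ioi (Filter.Eventually.of_forall
            fun t ht => by rw [← neg_mul]; exact hpow (hr.trans ht) (h₁ t ht))
      _ = _ := by
          rw [lintegral_const_mul _ (by fun_prop), lintegral_Ioi_div_rpow_neg hr (by positivity)]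

lemma le_ofReal_of_decay {a b r D : ℝ} (hq : 1 ≤ q) (ha : 0 < a) (hb : 0 < b) (hr : 0 < r)
    (hD : 0 ≤ D) (h₀ : ∀ t ∈ Ioc 0 r, t ^ (-θ) * G t ≤ D * (t / r) ^ a)
    (h₁ : ∀ t ∈ Ioi r, t ^ (-θ) * G t ≤ D * (t / r) ^ (-b)) :
    weightedNorm θ q G ≤ ENNReal.ofReal ((1 + a⁻¹ + b⁻¹) * D) := by
  have hκ : 1 ≤ 1 + a⁻¹ + b⁻¹ := by
    have := inv_pos.2 ha; have := inv_pos.2 hb; linarith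
  unfold weightedNorm
  split_ifs with hq_top
  · refine iSup₂_le fun t ht => ENNReal.ofReal_le_ofReal ?_
    have : t ^ (-θ) * G t ≤ D := by
      rcases le_or_gt t r with htr | htr
      · exact (h₀ t ⟨ht, htr⟩).trans (mul_le_of_le_one_right hD
          (Real.rpow_le_one (by positivity [ht.out.le]) ((div_le_one hr).2 htr) ha.le))
      · exact (h₁ t htr).trans (mul_le_of_le_one_right hD
          (Real.rpow_le_one_of_one_le_of_nonpos ((one_le_div hr).2 htr.le) (by linarith)))
    nlinarith
  set p := q.toReal
  have hp : 1 ≤ p := by simpa using ENNReal.toReal_mono hq_top hq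
  have hp₀ : 0 < p := by linarith
  have hsum : (a * p)⁻¹ + (b * p)⁻¹ ≤ (1 + a⁻¹ + b⁻¹) ^ p := by
    have h₁ : (a * p)⁻¹ ≤ a⁻¹ := inv_anti₀ ha (le_mul_of_one_le_right ha.le hp)
    have h₂ : (b * p)⁻¹ ≤ b⁻¹ := inv_anti₀ hb (le_mul_of_one_le_right hb.le hp)
    have h₃ : 1 + a⁻¹ + b⁻¹ ≤ (1 + a⁻¹ + b⁻¹) ^ p := by
      simpa using Real.rpow_le_rpow_of_exponent_le hκ hp
    linarith
  calc _ ≤ (ENNReal.ofReal (D ^ p) * ENNReal.ofReal ((a * p)⁻¹ + (b * p)⁻¹)) ^ (1 / p) := by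
        gcongr
        exact lintegral_rpow_le_of_decay ha hb hr hD hp₀ h₀ h₁
    _ ≤ ENNReal.ofReal (((1 + a⁻¹ + b⁻¹) * D) ^ p) ^ (1 / p) := by
        rw [← ENNReal.ofReal_mul (by positivity), Real.mul_rpow (by positivity) hD, mul_comm]
        gcongr
    _ = _ := by
        rw [ENNReal.ofReal_rpow_of_nonneg (by positivity) (by positivity),
          ← Real.rpow_mul (by positivity), mul_one_div_cancel hp₀.ne', Real.rpow_one]

lemma ofReal_le_four_mul (hθ₀ : 0 ≤ θ) (hθ₁ : θ ≤ 1) (hq : 1 ≤ q) (hG : MonotoneOn G (Ioi 0))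
    (hG₀ : ∀ t ∈ Ioi (0 : ℝ), 0 ≤ G t) {t : ℝ} (ht : 0 < t) :
    ENNReal.ofReal (t ^ (-θ) * G t) ≤ 4 * weightedNorm θ q G := by
  unfold weightedNorm
  split_ifs with hq_top
  · exact (le_iSup₂ (f := fun s (_ : s ∈ Ioi (0 : ℝ)) => ENNReal.ofReal (s ^ (-θ) * G s))
      t ht).trans (le_mul_of_one_le_left bot_le (by norm_num))
  set p := q.toReal
  have hp : 1 ≤ p := by simpa using ENNReal.toReal_mono hq_top hq
  -- the integrand is at least `c = (2t)^{-θ} G t` on `(t, 2t]`, a set of `dt/t`-measure `≥ 1/2`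
  have hc := rpow_neg_mul_le_two_mul hθ₁ ht (hG₀ t ht)
  set c := (2 * t) ^ (-θ) * G t
  have hc_le : ∀ s ∈ Ioc t (2 * t), c ≤ s ^ (-θ) * G s := fun s hs => by
    have hs₀ : 0 < s := ht.trans hs.1
    exact mul_le_mul (Real.rpow_le_rpow_of_nonpos hs₀ hs.2 (by linarith))
      (hG ht hs₀ hs.1.le) (hG₀ t ht) (by positivity)
  have hμ := ofReal_inv_two_le_withDensity_Ioc ht
  have hint : ENNReal.ofReal c ^ p * ENNReal.ofReal 2⁻¹ ≤
      ∫⁻ s in Ioi 0, ENNReal.ofReal (s ^ (-θ) * G s) ^ p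
        ∂(volume.withDensity fun s => ENNReal.ofReal s⁻¹) :=
    calc _ ≤ ∫⁻ _ in Ioc t (2 * t), ENNReal.ofReal c ^ p
          ∂(volume.withDensity fun s => ENNReal.ofReal s⁻¹) := by
          rw [setLIntegral_const]; gcongr
      _ ≤ ∫⁻ s in Ioc t (2 * t), ENNReal.ofReal (s ^ (-θ) * G s) ^ p
          ∂(volume.withDensity fun s => ENNReal.ofReal s⁻¹) :=
          setLIntegral_mono_ae' measurableSet_Ioc (Filter.Eventually.of_forall fun s hs =>
            ENNReal.rpow_le_rpow (ENNReal.ofReal_le_ofReal (hc_le s hs)) (by positivity))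
      _ ≤ _ := lintegral_mono_set fun s hs => ht.trans hs.1
  have hhalf : ENNReal.ofReal 2⁻¹ ≤ ENNReal.ofReal 2⁻¹ ^ (1 / p) := by
    conv_lhs => rw [← ENNReal.rpow_one (ENNReal.ofReal 2⁻¹)]
    exact ENNReal.rpow_le_rpow_of_exponent_ge (ENNReal.ofReal_le_one.2 (by norm_num))
      ((div_le_one (by linarith)).2 hp)
  calc ENNReal.ofReal (t ^ (-θ) * G t) ≤ 4 * (ENNReal.ofReal c * ENNReal.ofReal 2⁻¹) := by
        rw [← ENNReal.ofReal_mul (mul_nonneg (by positivity) (hG₀ t ht)),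
          show (4 : ℝ≥0∞) = ENNReal.ofReal 4 by norm_num, ← ENNReal.ofReal_mul (by norm_num)]
        exact ENNReal.ofReal_le_ofReal (by linarith)
    _ ≤ 4 * (ENNReal.ofReal c ^ p * ENNReal.ofReal 2⁻¹) ^ (1 / p) := by
        rw [ENNReal.mul_rpow_of_nonneg _ _ (by positivity), ← ENNReal.rpow_mul,
          mul_one_div_cancel (by positivity), ENNReal.rpow_one]
        gcongr
    _ ≤ _ := by gcongr

end weightedNorm

lemma rpow_neg_mul_rpow_div {ε t : ℝ} (hε : 0 < ε) (ht : 0 < t) (A θ θ' s : ℝ) :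
    t ^ (-θ') * (A * ε ^ θ * (t / ε) ^ s) = A * ε ^ (θ - θ') * (t / ε) ^ (s - θ') := by
  rw [Real.rpow_sub hε, Real.rpow_sub (by positivity), Real.div_rpow ht.le hε.le,
    Real.div_rpow ht.le hε.le, Real.rpow_neg ht.le]
  field_simp

section Interpolation

variable {X₀ X₁ : Type*} [NormedAddCommGroup X₀] [NormedSpace ℝ X₀]
    [NormedAddCommGroup X₁] [NormedSpace ℝ X₁] (j : X₁ →L[ℝ] X₀)
    {θ θ' N ε : ℝ} {q : ℝ≥0∞} {f : X₀} {g : X₁}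

lemma Kfunctional_le_of_interpNorm_le (hθ₀ : 0 ≤ θ) (hθ₁ : θ ≤ 1) (hq : 1 ≤ q) (hN : 0 ≤ N)
    (hf : interpNorm j θ q f ≤ ENNReal.ofReal N) {t : ℝ} (ht : 0 < t) :
    Kfunctional j t f ≤ 4 * N * t ^ θ := by
  have h : ENNReal.ofReal (t ^ (-θ) * Kfunctional j t f) ≤ ENNReal.ofReal (4 * N) := by
    rw [ENNReal.ofReal_mul (by norm_num : (0 : ℝ) ≤ 4), ENNReal.ofReal_ofNat]
    calc _ ≤ 4 * interpNorm j θ q f := weightedNorm.ofReal_le_four_mul hθ₀ hθ₁ hq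
            ((Kfunctional.monotoneOn j f).mono Ioi_subset_Ici_self)
            (fun s hs => Kfunctional.nonneg j (le_of_lt hs) f) ht
      _ ≤ _ := by gcongr
  rw [ENNReal.ofReal_le_ofReal_iff (by positivity), Real.rpow_neg ht.le,
    inv_mul_le_iff₀ (by positivity)] at h
  linarith

lemma exists_decomposition_of_interpNorm_le (hθ₀ : 0 ≤ θ) (hθ₁ : θ ≤ 1) (hq : 1 ≤ q)
    (hN : 0 < N) (hf : interpNorm j θ q f ≤ ENNReal.ofReal N) (hε : 0 < ε) :
    ∃ g : X₁, ‖f - j g‖ ≤ 5 * N * ε ^ θ ∧ ε * ‖g‖ ≤ 5 * N * ε ^ θ := by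
  obtain ⟨g, hg⟩ := Kfunctional.exists_lt_add j (t := ε) f (δ := N * ε ^ θ) (by positivity)
  have hK := Kfunctional_le_of_interpNorm_le j hθ₀ hθ₁ hq hN.le hf hε
  have : 0 ≤ ε * ‖g‖ := by positivity
  exact ⟨g, by linarith [norm_nonneg (f - j g)], by linarith [norm_nonneg (f - j g)]⟩

lemma interpNorm_map_le_self (hθ₀ : 0 < θ) (hθ₁ : θ < 1) (hq : 1 ≤ q) (hN : 0 ≤ N) (hε : 0 < ε)
    (hf : interpNorm j θ q f ≤ ENNReal.ofReal N) (h₁ : ‖f - j g‖ ≤ 5 * N * ε ^ θ)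
    (h₂ : ε * ‖g‖ ≤ 5 * N * ε ^ θ) :
    interpNorm j θ q (j g) ≤ ENNReal.ofReal ((1 + 5 * (1 + (1 - θ)⁻¹ + θ⁻¹)) * N) := by
  set H : ℝ → ℝ := fun t => 5 * N * ε ^ θ * min 1 (t / ε)
  have hK : ∀ t ∈ Ioi (0 : ℝ), Kfunctional j t (j g) ≤ Kfunctional j t f + H t := fun t ht => by
    have hKf := Kfunctional.nonneg j (le_of_lt ht) f
    have hjg := Kfunctional.le_add_norm_sub j (le_of_lt ht) f (j g)
    have hg : Kfunctional j t (j g) ≤ t / ε * (ε * ‖g‖) :=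
      (Kfunctional.map_le j (le_of_lt ht) g).trans_eq (by field_simp)
    rw [norm_sub_rev] at hjg
    rcases min_cases 1 (t / ε) with ⟨hmin, -⟩ | ⟨hmin, -⟩ <;> simp only [H, hmin]
    · linarith
    · nlinarith [mul_le_mul_of_nonneg_left h₂ (div_nonneg (le_of_lt ht) hε.le)]
  have hH : weightedNorm θ q H ≤ ENNReal.ofReal ((1 + (1 - θ)⁻¹ + θ⁻¹) * (5 * N)) := by
    refine weightedNorm.le_ofReal_of_decay hq (sub_pos.2 hθ₁) hθ₀ hε (by positivity)
      (fun t ht => ?_) (fun t ht => ?_)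
    · calc t ^ (-θ) * H t ≤ t ^ (-θ) * (5 * N * ε ^ θ * (t / ε) ^ (1 : ℝ)) := by
            rw [Real.rpow_one]
            exact mul_le_mul_of_nonneg_left (mul_le_mul_of_nonneg_left (min_le_right _ _)
              (by positivity)) (Real.rpow_nonneg ht.1.le _)
        _ = _ := by rw [rpow_neg_mul_rpow_div hε ht.1, sub_self, Real.rpow_zero, mul_one]
    · have ht₀ : 0 < t := hε.trans ht
      calc t ^ (-θ) * H t ≤ t ^ (-θ) * (5 * N * ε ^ θ * (t / ε) ^ (0 : ℝ)) := by
            rw [Real.rpow_zero]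
            exact mul_le_mul_of_nonneg_left (mul_le_mul_of_nonneg_left (min_le_left _ _)
              (by positivity)) (Real.rpow_nonneg ht₀.le _)
        _ = _ := by rw [rpow_neg_mul_rpow_div hε ht₀, sub_self, Real.rpow_zero, mul_one, zero_sub]
  rw [interpNorm_eq_weightedNorm]
  calc _ ≤ weightedNorm θ q (fun t => Kfunctional j t f + H t) := weightedNorm.mono hK
    _ ≤ weightedNorm θ q (fun t => Kfunctional j t f) + weightedNorm θ q H :=
        weightedNorm.add_le hq (aemeasurable_restrict_of_monotoneOn measurableSet_Ioi
          ((Kfunctional.monotoneOn j f).mono Ioi_subset_Ici_self)) (by fun_prop)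
    _ ≤ ENNReal.ofReal N + ENNReal.ofReal ((1 + (1 - θ)⁻¹ + θ⁻¹) * (5 * N)) := add_le_add hf hH
    _ = _ := by rw [← ENNReal.ofReal_add hN (by positivity)]; ring_nf

lemma interpNorm_map_le_of_lt (hθ₀ : 0 ≤ θ) (hθθ' : θ < θ') (hθ' : θ' < 1) (hq : 1 ≤ q)
    (hN : 0 ≤ N) (hε : 0 < ε) (hf : interpNorm j θ q f ≤ ENNReal.ofReal N)
    (h₁ : ‖f - j g‖ ≤ 5 * N * ε ^ θ) (h₂ : ε * ‖g‖ ≤ 5 * N * ε ^ θ) :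
    interpNorm j θ' q (j g) ≤
      ENNReal.ofReal ((1 + (1 - θ')⁻¹ + (θ' - θ)⁻¹) * (9 * N * ε ^ (θ - θ'))) := by
  refine weightedNorm.le_ofReal_of_decay hq (sub_pos.2 hθ') (sub_pos.2 hθθ') hε (by positivity)
    (fun t ht => ?_) (fun t ht => ?_)
  · have hg : Kfunctional j t (j g) ≤ 9 * N * ε ^ θ * (t / ε) ^ (1 : ℝ) := by
      rw [Real.rpow_one]
      calc Kfunctional j t (j g) ≤ t / ε * (ε * ‖g‖) :=
            (Kfunctional.map_le j ht.1.le g).trans_eq (by field_simp)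
        _ ≤ t / ε * (9 * N * ε ^ θ) := mul_le_mul_of_nonneg_left
            (by linarith [mul_nonneg hN (Real.rpow_nonneg hε.le θ)]) (div_nonneg ht.1.le hε.le)
        _ = _ := by ring
    calc t ^ (-θ') * Kfunctional j t (j g) ≤ t ^ (-θ') * (9 * N * ε ^ θ * (t / ε) ^ (1 : ℝ)) :=
          mul_le_mul_of_nonneg_left hg (Real.rpow_nonneg ht.1.le _)
      _ = _ := rpow_neg_mul_rpow_div hε ht.1 _ _ _ _
  · have ht₀ : 0 < t := hε.trans ht
    have hg : Kfunctional j t (j g) ≤ 9 * N * ε ^ θ * (t / ε) ^ θ := by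
      have hKf := Kfunctional_le_of_interpNorm_le j hθ₀ (by linarith) hq hN hf ht₀
      have hjg := Kfunctional.le_add_norm_sub j ht₀.le f (j g)
      have hεt : ε ^ θ ≤ t ^ θ := Real.rpow_le_rpow hε.le ht.le hθ₀
      rw [norm_sub_rev] at hjg
      have hscale : ε ^ θ * (t / ε) ^ θ = t ^ θ := by
        rw [← Real.mul_rpow hε.le (by positivity), mul_div_cancel₀ _ hε.ne']
      rw [mul_assoc, hscale]
      linarith [mul_le_mul_of_nonneg_left hεt (by positivity : (0 : ℝ) ≤ 5 * N)]
    calc t ^ (-θ') * Kfunctional j t (j g) ≤ t ^ (-θ') * (9 * N * ε ^ θ * (t / ε) ^ θ) :=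
          mul_le_mul_of_nonneg_left hg (Real.rpow_nonneg ht₀.le _)
      _ = _ := by rw [rpow_neg_mul_rpow_div hε ht₀, neg_sub]

lemma exists_rpow_mul_interpNorm_map_le (hθ₀ : 0 < θ) (hθθ' : θ ≤ θ') (hθ' : θ' < 1)
    (hq : 1 ≤ q) :
    ∃ c : ℝ, 0 ≤ c ∧ ∀ {N ε : ℝ} {f : X₀} {g : X₁}, 0 ≤ N → 0 < ε →
      interpNorm j θ q f ≤ ENNReal.ofReal N → ‖f - j g‖ ≤ 5 * N * ε ^ θ →
      ε * ‖g‖ ≤ 5 * N * ε ^ θ → ε ^ θ' * (interpNorm j θ' q (j g)).toReal ≤ c * N * ε ^ θ := by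
  rcases hθθ'.eq_or_lt with rfl | hlt
  · have hc : 0 ≤ 1 + 5 * (1 + (1 - θ)⁻¹ + θ⁻¹) := by
      have := inv_pos.2 (sub_pos.2 hθ'); have := inv_pos.2 hθ₀; linarith
    refine ⟨_, hc, fun {N ε f g} hN hε hf h₁ h₂ => ?_⟩
    have := ENNReal.toReal_le_of_le_ofReal (mul_nonneg hc hN)
      (interpNorm_map_le_self j hθ₀ hθ' hq hN hε hf h₁ h₂)
    calc _ ≤ ε ^ θ * ((1 + 5 * (1 + (1 - θ)⁻¹ + θ⁻¹)) * N) :=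
          mul_le_mul_of_nonneg_left this (by positivity)
      _ = _ := by ring
  · have hκ : 0 ≤ 1 + (1 - θ')⁻¹ + (θ' - θ)⁻¹ := by
      have := inv_pos.2 (sub_pos.2 hθ'); have := inv_pos.2 (sub_pos.2 hlt); linarith
    refine ⟨_, mul_nonneg hκ (by norm_num : (0 : ℝ) ≤ 9), fun {N ε f g} hN hε hf h₁ h₂ => ?_⟩
    have := ENNReal.toReal_le_of_le_ofReal (mul_nonneg hκ (by positivity))
      (interpNorm_map_le_of_lt j hθ₀.le hlt hθ' hq hN hε hf h₁ h₂)
    calc _ ≤ ε ^ θ' * ((1 + (1 - θ')⁻¹ + (θ' - θ)⁻¹) * (9 * N * ε ^ (θ - θ'))) :=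
          mul_le_mul_of_nonneg_left this (by positivity)
      _ = (1 + (1 - θ')⁻¹ + (θ' - θ)⁻¹) * 9 * N * (ε ^ θ' * ε ^ (θ - θ')) := by ring
      _ = _ := by rw [← Real.rpow_add hε, add_sub_cancel]

end Interpolation

theorem stmt_1_general {X₀ X₁ : Type*} [NormedAddCommGroup X₀] [NormedSpace ℝ X₀]
    [NormedAddCommGroup X₁] [NormedSpace ℝ X₁]
    (j : X₁ →L[ℝ] X₀)
    (n : ℕ) (hn : 0 < n) (θ : Fin n → ℝ) (hθmono : StrictMono θ)
    (hθ : ∀ i, θ i ∈ Set.Ioo (0 : ℝ) 1) (q : ℝ≥0∞) (hq : 1 ≤ q)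
    (l : X₀ →L[ℝ] ℝ) (C₀ C₁ : ℝ) (hC₀ : 0 < C₀) (hC₁ : 0 < C₁)
    (hl₀ : ∀ f : X₀, |l f| ≤ C₀ * ‖f‖) :
    ∃ C > 0, ∀ ε : ℝ, 0 < ε →
      (∀ g : X₁, |l (j g)| ≤
          C₁ * ((∑ i : Fin n, ε ^ θ i * (interpNorm j (θ i) q (j g)).toReal)
            + ε * ‖g‖)) →
      ∀ f : X₀, interpNorm j (θ ⟨0, hn⟩) q f ≠ ⊤ →
        |l f| ≤ C * ε ^ θ ⟨0, hn⟩ * (interpNorm j (θ ⟨0, hn⟩) q f).toReal := by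
  set θ₁ := θ ⟨0, hn⟩
  choose c hc₀ hc using fun i : Fin n => exists_rpow_mul_interpNorm_map_le j (hθ ⟨0, hn⟩).1
    (hθmono.monotone (Fin.le_iff_val_le_val.2 (Nat.zero_le i))) (hθ i).2 hq
  have hc_sum : 0 ≤ ∑ i, c i := Finset.sum_nonneg fun i _ => hc₀ i
  refine ⟨5 * C₀ + C₁ * (∑ i, c i + 5), by positivity, fun ε hε hl₁ f hf => ?_⟩
  set M := (interpNorm j θ₁ q f).toReal
  -- working with `N > M` keeps the slack `N ε^θ₁` of the near-minimiser of `K(ε, f)` positive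
  have key : ∀ N > M, |l f| ≤ (5 * C₀ + C₁ * (∑ i, c i + 5)) * ε ^ θ₁ * N := fun N hN => by
    have hN₀ : 0 < N := ENNReal.toReal_nonneg.trans_lt hN
    have hfN : interpNorm j θ₁ q f ≤ ENNReal.ofReal N :=
      (ENNReal.le_ofReal_iff_toReal_le hf hN₀.le).2 hN.le
    obtain ⟨g, h₁, h₂⟩ := exists_decomposition_of_interpNorm_le j (hθ ⟨0, hn⟩).1.le
      (hθ ⟨0, hn⟩).2.le hq hN₀ hfN hε
    have hsum : ∑ i, ε ^ θ i * (interpNorm j (θ i) q (j g)).toReal ≤ (∑ i, c i) * N * ε ^ θ₁ := by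
      simp only [Finset.sum_mul]
      exact Finset.sum_le_sum fun i _ => hc i hN₀.le hε hfN h₁ h₂
    calc |l f| = |l (f - j g) + l (j g)| := by rw [← map_add, sub_add_cancel]
      _ ≤ C₀ * ‖f - j g‖ + C₁ * (∑ i, ε ^ θ i * (interpNorm j (θ i) q (j g)).toReal + ε * ‖g‖) :=
        (abs_add_le _ _).trans (add_le_add (hl₀ _) (hl₁ g))
      _ ≤ C₀ * (5 * N * ε ^ θ₁) + C₁ * ((∑ i, c i) * N * ε ^ θ₁ + 5 * N * ε ^ θ₁) := by gcongr
      _ = _ := by ring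
  exact ge_of_tendsto (((continuous_const.mul continuous_id).tendsto M).mono_left
    nhdsWithin_le_nhds) (eventually_nhdsWithin_of_forall (s := Ioi M) key)

/-- Multi-parameter functional interpolation lemma (Lemma 2.2 of the paper):
for `0 < θ₁ < ⋯ < θₙ < 1`, if `l ∈ X₀'` satisfies `|l f| ≤ C₀ ‖f‖_{X₀}` on `X₀`
and `|l f| ≤ C₁ (∑ᵢ ε^{θᵢ} ‖f‖_{X_{θᵢ}} + ε ‖f‖_{X₁})` on `X₁`, then there is a
constant `C` independent of `ε` with `|l f| ≤ C ε^{θ₁} ‖f‖_{X_{θ₁}}` on `X_{θ₁}`. -/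
theorem stmt_1 {X₀ X₁ : Type*} [NormedAddCommGroup X₀] [NormedSpace ℝ X₀]
    [NormedAddCommGroup X₁] [NormedSpace ℝ X₁]
    (j : X₁ →L[ℝ] X₀) (hj : Function.Injective j)
    (n : ℕ) (hn : 0 < n) (θ : Fin n → ℝ) (hθmono : StrictMono θ)
    (hθ : ∀ i, θ i ∈ Set.Ioo (0 : ℝ) 1) (q : ℝ≥0∞) (hq : 1 ≤ q)
    (l : X₀ →L[ℝ] ℝ) (C₀ C₁ : ℝ) (hC₀ : 0 < C₀) (hC₁ : 0 < C₁)
    (hl₀ : ∀ f : X₀, |l f| ≤ C₀ * ‖f‖) :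
    ∃ C > 0, ∀ ε : ℝ, 0 < ε →
      (∀ g : X₁, |l (j g)| ≤
          C₁ * ((∑ i : Fin n, ε ^ θ i * (interpNorm j (θ i) q (j g)).toReal)
            + ε * ‖g‖)) →
      ∀ f : X₀, interpNorm j (θ ⟨0, hn⟩) q f ≠ ⊤ →
        |l f| ≤ C * ε ^ θ ⟨0, hn⟩ * (interpNorm j (θ ⟨0, hn⟩) q f).toReal :=
  stmt_1_general j n hn θ hθmono hθ q hq l C₀ C₁ hC₀ hC₁ hl₀
end

section
/- Let $f: Q \to \mathbb{C}$ be continuous on the box $Q = \prod_{i=1}^n [a_i,b_i] \subset \mathbb{R}^n$, and let $I^{Cheb}_p$ denote tensor-product Chebyshev interpolation of degree $p$ in each variable, with $\Lambda_p$ the Lebesgue constant of univariate Chebyshev interpolation. For $x \in Q$ and $i \in \{1,\dots,n\}$ define $f_{x,i}(t) = f(x_1,\dots,x_{i-1},(a_i+b_i)/2 + t(b_i-a_i)/2, x_{i+1},\dots,x_n)$ for $t \in [-1,1]$. Then $\|f - I^{Cheb}_p f\|_{L^\infty(Q)} \le (1+\Lambda_p)\Lambda_p^{n-1} \sum_{i=1}^n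 \sup_{x \in Q} \inf_{\pi \in \mathbb{P}_p} \|f_{x,i} - \pi\|_{L^\infty(-1,1)}$. -/
/-!
Let `I⁽⁰⁾` be univariate interpolation in the first variable and `Eᵢ(f)` the `i`-th term of the
sum. Interpolating in `x₀` first, `I_{n+1} f (x) = Σ_m ℓ_m(x₀) · (I_n f(ν_m, ·))(x')`, hence
`f - I_{n+1} f = (f - I⁽⁰⁾ f) + I⁽⁰⁾(f(ν_m, ·) - I_n f(ν_m, ·))`.
Since univariate interpolation reproduces `ℙ_p` and has norm `Λ_p`, the first term is at most
`(1 + Λ_p) E₀(f)` (Lebesgue's lemma), and the second at most `Λ_p` times the `n`-variable error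
of the slices `f(ν_m, ·)`, whose directional best approximation errors are bounded by those of
`f`. Induction on `n` gives `‖f - I f‖ ≤ (1 + Λ_p) Σᵢ Λ_pⁱ Eᵢ(f)`, and `Λ_p ≥ 1` bounds `Λ_pⁱ`
by `Λ_p^{n-1}`.
-/

open Set

/-- The `j`-th Chebyshev interpolation node of degree `p` on `[-1,1]`. -/
noncomputable def chebNode (p : ℕ) (j : Fin (p + 1)) : ℝ :=
  Real.cos ((2 * (j : ℝ) + 1) * Real.pi / (2 * ((p : ℝ) + 1)))

/-- The `j`-th Lagrange basis polynomial for the Chebyshev nodes of degree `p`. -/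
noncomputable def chebBasis (p : ℕ) (j : Fin (p + 1)) (t : ℝ) : ℝ :=
  ∏ k ∈ Finset.univ.erase j, (t - chebNode p k) / (chebNode p j - chebNode p k)

/-- The Lebesgue constant `Λ_p` of univariate Chebyshev interpolation:
the sup over `[-1,1]` of the sum of absolute values of the Lagrange basis. -/
noncomputable def chebLebesgue (p : ℕ) : ℝ :=
  sSup ((fun t => ∑ j : Fin (p + 1), |chebBasis p j t|) '' Icc (-1 : ℝ) 1)

/-- The affine map from `[-1,1]` onto `[a,b]`. -/
noncomputable def affMap (a b t : ℝ) : ℝ := (a + b) / 2 + t * (b - a) / 2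

/-- The affine map from `[a,b]` onto `[-1,1]`. -/
noncomputable def affInv (a b x : ℝ) : ℝ := (2 * x - a - b) / (b - a)

/-- The tensor-product Chebyshev interpolation operator `I^Cheb_p` of degree `p`
in each variable, on the box `Q = ∏ᵢ [aᵢ, bᵢ] ⊆ ℝⁿ`. -/
noncomputable def tensorCheb (n p : ℕ) (a b : Fin n → ℝ)
    (f : (Fin n → ℝ) → ℂ) (x : Fin n → ℝ) : ℂ :=
  ∑ j : Fin n → Fin (p + 1),
    f (fun i => affMap (a i) (b i) (chebNode p (j i))) *
      ∏ i : Fin n, (chebBasis p (j i) (affInv (a i) (b i) (x i)) : ℂ)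

lemma chebNode_mem_Icc (p : ℕ) (j : Fin (p + 1)) : chebNode p j ∈ Icc (-1 : ℝ) 1 :=
  ⟨Real.neg_one_le_cos _, Real.cos_le_one _⟩

lemma chebNode_injective (p : ℕ) : Function.Injective (chebNode p) := by
  have hd : (0 : ℝ) < 2 * ((p : ℝ) + 1) := by positivity
  have hangle : ∀ j : Fin (p + 1),
      (2 * (j : ℝ) + 1) * Real.pi / (2 * ((p : ℝ) + 1)) ∈ Icc 0 Real.pi := by
    intro j
    have hj : (j : ℝ) ≤ p := by exact_mod_cast Nat.lt_succ_iff.mp j.isLt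
    refine ⟨by positivity, ?_⟩
    rw [div_le_iff₀ hd]
    nlinarith [Real.pi_pos]
  intro j k h
  have hjk := Real.injOn_cos (hangle j) (hangle k) h
  field_simp at hjk
  exact Fin.ext (by exact_mod_cast (by linarith : (j : ℝ) = k))

lemma continuous_chebBasis (p : ℕ) (j : Fin (p + 1)) : Continuous (chebBasis p j) :=
  continuous_finsetProd _ fun _ _ => (continuous_id.sub continuous_const).div_const _

lemma ofReal_chebBasis (p : ℕ) (j : Fin (p + 1)) (t : ℝ) :
    (chebBasis p j t : ℂ) =
      (Lagrange.basis Finset.univ (fun k => (chebNode p k : ℂ)) j).eval (t : ℂ) := by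
  simp only [chebBasis, Lagrange.basis, Lagrange.basisDivisor, Polynomial.eval_prod,
    Polynomial.eval_mul, Polynomial.eval_C, Polynomial.eval_sub, Polynomial.eval_X]
  push_cast
  exact Finset.prod_congr rfl fun _ _ => div_eq_inv_mul _ _

noncomputable def chebInterp (p : ℕ) (g : ℝ → ℂ) (t : ℝ) : ℂ :=
  ∑ j : Fin (p + 1), g (chebNode p j) * (chebBasis p j t : ℂ)

lemma chebInterp_sub (p : ℕ) (g h : ℝ → ℂ) (t : ℝ) :
    chebInterp p (fun s => g s - h s) t = chebInterp p g t - chebInterp p h t := by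
  simp only [chebInterp, sub_mul, Finset.sum_sub_distrib]

lemma chebInterp_eval (p : ℕ) {π : Polynomial ℂ} (hπ : π.natDegree ≤ p) (t : ℝ) :
    chebInterp p (fun s => π.eval (s : ℂ)) t = π.eval (t : ℂ) := by
  have hinj : Set.InjOn (fun k => (chebNode p k : ℂ)) (Finset.univ : Finset (Fin (p + 1))) :=
    fun j _ k _ h => chebNode_injective p (Complex.ofReal_injective h)
  have hdeg : π.degree < (Finset.univ : Finset (Fin (p + 1))).card := by
    rw [Finset.card_univ, Fintype.card_fin]
    exact (Polynomial.degree_le_of_natDegree_le hπ).trans_lt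
      (WithBot.coe_lt_coe.2 p.lt_succ_self)
  conv_rhs => rw [Lagrange.eq_interpolate hinj hdeg]
  simp only [chebInterp, ofReal_chebBasis, Lagrange.interpolate_apply, Polynomial.eval_finsetSum,
    Polynomial.eval_mul, Polynomial.eval_C]

lemma sum_abs_chebBasis_le_chebLebesgue (p : ℕ) {t : ℝ} (ht : t ∈ Icc (-1 : ℝ) 1) :
    ∑ j : Fin (p + 1), |chebBasis p j t| ≤ chebLebesgue p :=
  have hcont : Continuous fun t => ∑ j : Fin (p + 1), |chebBasis p j t| :=
    continuous_finsetSum _ fun j _ => (continuous_chebBasis p j).abs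
  le_csSup (isCompact_Icc.image hcont).bddAbove (mem_image_of_mem _ ht)

lemma norm_chebInterp_le (p : ℕ) {g : ℝ → ℂ} {M : ℝ} (hg : ∀ j, ‖g (chebNode p j)‖ ≤ M)
    {t : ℝ} (ht : t ∈ Icc (-1 : ℝ) 1) : ‖chebInterp p g t‖ ≤ chebLebesgue p * M := by
  have hM : 0 ≤ M := (norm_nonneg _).trans (hg 0)
  calc ‖chebInterp p g t‖ ≤ ∑ j : Fin (p + 1), ‖g (chebNode p j)‖ * |chebBasis p j t| := by
        refine (norm_sum_le _ _).trans_eq ?_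
        simp only [norm_mul, Complex.norm_real, Real.norm_eq_abs]
    _ ≤ ∑ j : Fin (p + 1), M * |chebBasis p j t| := by gcongr with j; exact hg j
    _ ≤ M * chebLebesgue p := by
        rw [← Finset.mul_sum]; gcongr; exact sum_abs_chebBasis_le_chebLebesgue p ht
    _ = chebLebesgue p * M := mul_comm _ _

lemma one_le_chebLebesgue (p : ℕ) : 1 ≤ chebLebesgue p := by
  have hconst : chebInterp p (fun _ => 1) 0 = 1 := by
    simpa using chebInterp_eval p (π := 1) (by simp) 0
  have h := norm_chebInterp_le p (g := fun _ => 1) (M := 1) (by simp) (t := 0) (by norm_num)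
  rwa [hconst, norm_one, mul_one] at h

lemma norm_sub_chebInterp_le_of_norm_le (p : ℕ) {g : ℝ → ℂ} {M : ℝ}
    (hg : ∀ s ∈ Icc (-1 : ℝ) 1, ‖g s‖ ≤ M) {t : ℝ} (ht : t ∈ Icc (-1 : ℝ) 1) :
    ‖g t - chebInterp p g t‖ ≤ (1 + chebLebesgue p) * M :=
  calc ‖g t - chebInterp p g t‖ ≤ ‖g t‖ + ‖chebInterp p g t‖ := norm_sub_le _ _
    _ ≤ M + chebLebesgue p * M :=
        add_le_add (hg t ht) (norm_chebInterp_le p (fun j => hg _ (chebNode_mem_Icc p j)) ht)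
    _ = (1 + chebLebesgue p) * M := by ring

noncomputable def bestApproxErr (p : ℕ) (g : ℝ → ℂ) : ℝ :=
  sInf {r : ℝ | ∃ π : Polynomial ℂ, π.natDegree ≤ p ∧
    r = sSup ((fun t => ‖g t - π.eval (t : ℂ)‖) '' Icc (-1 : ℝ) 1)}

lemma bestApproxErr_nonneg (p : ℕ) (g : ℝ → ℂ) : 0 ≤ bestApproxErr p g := by
  refine Real.sInf_nonneg ?_
  rintro _ ⟨π, -, rfl⟩
  exact Real.sSup_nonneg (by rintro _ ⟨t, -, rfl⟩; exact norm_nonneg _)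

lemma bestApproxErr_le_of_norm_le (p : ℕ) {g : ℝ → ℂ} {M : ℝ}
    (hg : ∀ t ∈ Icc (-1 : ℝ) 1, ‖g t‖ ≤ M) : bestApproxErr p g ≤ M := by
  unfold bestApproxErr
  refine le_trans (csInf_le ⟨0, ?_⟩ ⟨0, by simp, rfl⟩) ?_
  · rintro _ ⟨π, -, rfl⟩
    exact Real.sSup_nonneg (by rintro _ ⟨t, -, rfl⟩; exact norm_nonneg _)
  · refine csSup_le ((nonempty_Icc.2 (by norm_num)).image _) ?_
    rintro _ ⟨t, ht, rfl⟩
    simpa using hg t ht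

lemma norm_sub_chebInterp_le (p : ℕ) {g : ℝ → ℂ} (hg : ContinuousOn g (Icc (-1 : ℝ) 1))
    {t : ℝ} (ht : t ∈ Icc (-1 : ℝ) 1) :
    ‖g t - chebInterp p g t‖ ≤ (1 + chebLebesgue p) * bestApproxErr p g := by
  have hΛ : 0 < 1 + chebLebesgue p := by linarith [one_le_chebLebesgue p]
  rw [← div_le_iff₀' hΛ]
  refine le_csInf ⟨_, 0, by simp, rfl⟩ ?_
  rintro _ ⟨π, hπ, rfl⟩
  rw [div_le_iff₀' hΛ]
  set e : ℝ → ℂ := fun s => g s - π.eval (s : ℂ)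
  have he : ContinuousOn (fun s => ‖e s‖) (Icc (-1 : ℝ) 1) :=
    (hg.sub (Polynomial.continuous π |>.comp Complex.continuous_ofReal).continuousOn).norm
  have hbdd := (isCompact_Icc.image_of_continuousOn he).bddAbove
  have hsame : g t - chebInterp p g t = e t - chebInterp p e t := by
    rw [chebInterp_sub, chebInterp_eval p hπ]; ring
  rw [hsame]
  exact norm_sub_chebInterp_le_of_norm_le p (fun s hs => le_csSup hbdd (mem_image_of_mem _ hs)) ht

lemma affMap_mem_Icc {a b t : ℝ} (hab : a ≤ b) (ht : t ∈ Icc (-1 : ℝ) 1) :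
    affMap a b t ∈ Icc a b := by
  obtain ⟨h₁, h₂⟩ := ht
  unfold affMap
  constructor <;> nlinarith

lemma affInv_mem_Icc {a b x : ℝ} (hab : a < b) (hx : x ∈ Icc a b) :
    affInv a b x ∈ Icc (-1 : ℝ) 1 := by
  obtain ⟨h₁, h₂⟩ := hx
  have hba : 0 < b - a := sub_pos.2 hab
  unfold affInv
  constructor
  · rw [le_div_iff₀ hba]; linarith
  · rw [div_le_iff₀ hba]; linarith

lemma affMap_affInv {a b : ℝ} (hab : a < b) (x : ℝ) : affMap a b (affInv a b x) = x := by
  have : b - a ≠ 0 := sub_ne_zero.2 hab.ne'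
  unfold affMap affInv
  field_simp
  ring

lemma continuous_affMap (a b : ℝ) : Continuous (affMap a b) := by
  unfold affMap
  fun_prop

abbrev box {n : ℕ} (a b : Fin n → ℝ) : Set (Fin n → ℝ) := Set.univ.pi fun i => Icc (a i) (b i)

lemma isCompact_box {n : ℕ} (a b : Fin n → ℝ) : IsCompact (box a b) :=
  isCompact_univ_pi fun _ => isCompact_Icc

lemma cons_mem_box {n : ℕ} {a b : Fin (n + 1) → ℝ} {s : ℝ} {y : Fin n → ℝ}
    (hs : s ∈ Icc (a 0) (b 0)) (hy : y ∈ box (Fin.tail a) (Fin.tail b)) :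
    Fin.cons s y ∈ box a b := by
  simp only [box, Set.mem_univ_pi, Fin.forall_fin_succ, Fin.cons_zero, Fin.cons_succ] at hy ⊢
  exact ⟨hs, hy⟩

lemma update_affMap_mem_box {n : ℕ} {a b x : Fin n → ℝ} (hx : x ∈ box a b) (i : Fin n)
    {t : ℝ} (ht : t ∈ Icc (-1 : ℝ) 1) :
    Function.update x i (affMap (a i) (b i) t) ∈ box a b := by
  intro k _
  rcases eq_or_ne k i with rfl | hk
  · rw [Function.update_self]
    exact affMap_mem_Icc ((hx k trivial).1.trans (hx k trivial).2) ht
  · rw [Function.update_of_ne hk]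
    exact hx k trivial

section Directional

variable {n : ℕ} (p : ℕ) (a b : Fin n → ℝ) (f : (Fin n → ℝ) → ℂ)

noncomputable def dirBestApproxErr (i : Fin n) : ℝ :=
  sSup ((fun x => bestApproxErr p (fun t => f (Function.update x i (affMap (a i) (b i) t)))) ''
    box a b)

lemma dirBestApproxErr_nonneg (i : Fin n) : 0 ≤ dirBestApproxErr p a b f i :=
  Real.sSup_nonneg (by rintro _ ⟨x, -, rfl⟩; exact bestApproxErr_nonneg p _)

variable {a b f}

lemma bestApproxErr_le_dirBestApproxErr (hf : ContinuousOn f (box a b)) {x : Fin n → ℝ}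
    (hx : x ∈ box a b) (i : Fin n) :
    bestApproxErr p (fun t => f (Function.update x i (affMap (a i) (b i) t))) ≤
      dirBestApproxErr p a b f i := by
  obtain ⟨M, hM⟩ := (isCompact_box a b).exists_bound_of_continuousOn hf
  refine le_csSup ⟨M, ?_⟩ (mem_image_of_mem _ hx)
  rintro _ ⟨y, hy, rfl⟩
  exact bestApproxErr_le_of_norm_le p fun t ht => hM _ (update_affMap_mem_box hy i ht)

end Directional

lemma dirBestApproxErr_cons_le {n : ℕ} (p : ℕ) {a b : Fin (n + 1) → ℝ}
    {f : (Fin (n + 1) → ℝ) → ℂ} (hf : ContinuousOn f (box a b)) {s : ℝ}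
    (hs : s ∈ Icc (a 0) (b 0)) (i : Fin n) :
    dirBestApproxErr p (Fin.tail a) (Fin.tail b) (fun y => f (Fin.cons s y)) i ≤
      dirBestApproxErr p a b f i.succ := by
  refine Real.sSup_le ?_ (dirBestApproxErr_nonneg p a b f i.succ)
  rintro _ ⟨y, hy, rfl⟩
  simp only [Fin.cons_update]
  exact bestApproxErr_le_dirBestApproxErr p hf (cons_mem_box hs hy) i.succ

lemma tensorCheb_zero (p : ℕ) (a b : Fin 0 → ℝ) (f : (Fin 0 → ℝ) → ℂ) (x : Fin 0 → ℝ) :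
    tensorCheb 0 p a b f x = f x := by
  simp [tensorCheb, Subsingleton.elim _ x]

lemma tensorCheb_succ (n p : ℕ) (a b : Fin (n + 1) → ℝ) (f : (Fin (n + 1) → ℝ) → ℂ)
    (x : Fin (n + 1) → ℝ) :
    tensorCheb (n + 1) p a b f x =
      chebInterp p (fun t => tensorCheb n p (Fin.tail a) (Fin.tail b)
        (fun y => f (Fin.cons (affMap (a 0) (b 0) t) y)) (Fin.tail x))
        (affInv (a 0) (b 0) (x 0)) := by
  unfold tensorCheb chebInterp
  rw [← (Fin.consEquiv fun _ => Fin (p + 1)).sum_comp, Fintype.sum_prod_type]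
  refine Finset.sum_congr rfl fun m _ => ?_
  rw [Finset.sum_mul]
  refine Finset.sum_congr rfl fun j _ => ?_
  have hnode :
      (fun i => affMap (a i) (b i) (chebNode p (Fin.cons (α := fun _ => Fin (p + 1)) m j i))) =
      Fin.cons (affMap (a 0) (b 0) (chebNode p m))
        (fun i => affMap (a i.succ) (b i.succ) (chebNode p (j i))) := by
    ext i
    cases i using Fin.cases <;> rfl
  simp only [Fin.consEquiv_apply, hnode, Fin.prod_univ_succ, Fin.cons_zero, Fin.cons_succ,
    Fin.tail]
  ring

lemma tail_mem_box {n : ℕ} {a b x : Fin (n + 1) → ℝ} (hx : x ∈ box a b) :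
    Fin.tail x ∈ box (Fin.tail a) (Fin.tail b) :=
  fun i _ => hx i.succ trivial

lemma ContinuousOn.comp_update_affMap {n : ℕ} {a b x : Fin n → ℝ} {f : (Fin n → ℝ) → ℂ}
    (hf : ContinuousOn f (box a b)) (hx : x ∈ box a b) (i : Fin n) :
    ContinuousOn (fun t => f (Function.update x i (affMap (a i) (b i) t))) (Icc (-1 : ℝ) 1) :=
  hf.comp (continuous_const.update i (continuous_affMap _ _)).continuousOn
    fun _ ht => update_affMap_mem_box hx i ht

lemma ContinuousOn.comp_finCons {n : ℕ} {a b : Fin (n + 1) → ℝ} {f : (Fin (n + 1) → ℝ) → ℂ}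
    (hf : ContinuousOn f (box a b)) {s : ℝ} (hs : s ∈ Icc (a 0) (b 0)) :
    ContinuousOn (fun y => f (Fin.cons s y)) (box (Fin.tail a) (Fin.tail b)) :=
  have hcons : Continuous fun y : Fin n → ℝ => (Fin.cons s y : Fin (n + 1) → ℝ) :=
    continuous_const.finCons continuous_id
  hf.comp hcons.continuousOn fun _ hy => cons_mem_box hs hy

theorem norm_sub_tensorCheb_le (p : ℕ) {n : ℕ} {a b : Fin n → ℝ} (hab : ∀ i, a i < b i)
    {f : (Fin n → ℝ) → ℂ} (hf : ContinuousOn f (box a b)) {x : Fin n → ℝ} (hx : x ∈ box a b) :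
    ‖f x - tensorCheb n p a b f x‖ ≤
      (1 + chebLebesgue p) *
        ∑ i : Fin n, chebLebesgue p ^ (i : ℕ) * dirBestApproxErr p a b f i := by
  induction n with
  | zero => simp [tensorCheb_zero]
  | succ n ih =>
    set Λ := chebLebesgue p
    set t₀ := affInv (a 0) (b 0) (x 0)
    set g : ℝ → ℂ := fun t => f (Function.update x 0 (affMap (a 0) (b 0) t))
    set h : ℝ → ℂ := fun t => tensorCheb n p (Fin.tail a) (Fin.tail b)
      (fun y => f (Fin.cons (affMap (a 0) (b 0) t) y)) (Fin.tail x)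
    have hΛ : 0 ≤ Λ := zero_le_one.trans (one_le_chebLebesgue p)
    have ht₀ : t₀ ∈ Icc (-1 : ℝ) 1 := affInv_mem_Icc (hab 0) (hx 0 trivial)
    have hsplit : f x - tensorCheb (n + 1) p a b f x =
        (g t₀ - chebInterp p g t₀) + chebInterp p (fun t => g t - h t) t₀ := by
      rw [tensorCheb_succ, chebInterp_sub]
      simp only [g, t₀, affMap_affInv (hab 0), Function.update_eq_self]
      ring
    have hfirst : ‖g t₀ - chebInterp p g t₀‖ ≤ (1 + Λ) * dirBestApproxErr p a b f 0 :=
      (norm_sub_chebInterp_le p (hf.comp_update_affMap hx 0) ht₀).trans <| by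
        gcongr; exact bestApproxErr_le_dirBestApproxErr p hf hx 0
    have hrest : ∀ j, ‖g (chebNode p j) - h (chebNode p j)‖ ≤
        (1 + Λ) * ∑ i : Fin n, Λ ^ (i : ℕ) * dirBestApproxErr p a b f i.succ := by
      intro j
      have hs := affMap_mem_Icc (hab 0).le (chebNode_mem_Icc p j)
      have hg : g (chebNode p j) =
          f (Fin.cons (affMap (a 0) (b 0) (chebNode p j)) (Fin.tail x)) := by
        simp only [g]
        conv_lhs => rw [← Fin.cons_self_tail x, Fin.update_cons_zero]
      rw [hg]
      refine (ih (fun i => hab i.succ) (hf.comp_finCons hs) (tail_mem_box hx)).trans ?_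
      gcongr with i
      exact dirBestApproxErr_cons_le p hf hs i
    calc ‖f x - tensorCheb (n + 1) p a b f x‖
        ≤ ‖g t₀ - chebInterp p g t₀‖ + ‖chebInterp p (fun t => g t - h t) t₀‖ := by
          rw [hsplit]; exact norm_add_le _ _
      _ ≤ (1 + Λ) * dirBestApproxErr p a b f 0 +
            Λ * ((1 + Λ) * ∑ i : Fin n, Λ ^ (i : ℕ) * dirBestApproxErr p a b f i.succ) :=
          add_le_add hfirst (norm_chebInterp_le p hrest ht₀)
      _ = (1 + Λ) * ∑ i : Fin (n + 1), Λ ^ (i : ℕ) * dirBestApproxErr p a b f i := by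
          simp only [Fin.sum_univ_succ, Fin.val_zero, Fin.val_succ, pow_zero, pow_succ', mul_assoc,
            ← Finset.mul_sum]
          ring

theorem stmt_7_general (n p : ℕ) (a b : Fin n → ℝ) (hab : ∀ i, a i < b i)
    (f : (Fin n → ℝ) → ℂ)
    (hf : ContinuousOn f (Set.univ.pi fun i => Icc (a i) (b i))) :
    sSup ((fun x => ‖f x - tensorCheb n p a b f x‖) ''
        (Set.univ.pi fun i => Icc (a i) (b i))) ≤
      (1 + chebLebesgue p) * chebLebesgue p ^ (n - 1) *
        ∑ i : Fin n,
          sSup ((fun x : Fin n → ℝ =>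
            sInf {r : ℝ | ∃ π : Polynomial ℂ, π.natDegree ≤ p ∧
              r = sSup ((fun t =>
                ‖f (Function.update x i (affMap (a i) (b i) t)) -
                  π.eval (t : ℂ)‖) '' Icc (-1 : ℝ) 1)}) ''
            (Set.univ.pi fun i => Icc (a i) (b i))) := by
  have hΛ := one_le_chebLebesgue p
  have hE := dirBestApproxErr_nonneg p a b f
  refine Real.sSup_le ?_ (mul_nonneg (by positivity) (Finset.sum_nonneg fun i _ => hE i))
  rintro _ ⟨x, hx, rfl⟩
  calc ‖f x - tensorCheb n p a b f x‖
      ≤ (1 + chebLebesgue p) *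
          ∑ i : Fin n, chebLebesgue p ^ (i : ℕ) * dirBestApproxErr p a b f i :=
        norm_sub_tensorCheb_le p hab hf hx
    _ ≤ (1 + chebLebesgue p) *
          ∑ i : Fin n, chebLebesgue p ^ (n - 1) * dirBestApproxErr p a b f i := by
        gcongr with i
        · exact hE i
        · omega
    _ = (1 + chebLebesgue p) * chebLebesgue p ^ (n - 1) * ∑ i, dirBestApproxErr p a b f i := by
        rw [← Finset.mul_sum, mul_assoc]

/-- Error bound for tensor-product Chebyshev interpolation: for continuous
`f : Q → ℂ` on the box `Q = ∏ᵢ [aᵢ,bᵢ]`,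
`‖f - I^Cheb_p f‖_{L^∞(Q)} ≤ (1+Λ_p) Λ_p^{n-1} ∑ᵢ sup_{x∈Q} inf_{π∈P_p} ‖f_{x,i} - π‖_{L^∞(-1,1)}`,
where `f_{x,i}(t) = f(x₁,…,x_{i-1}, (aᵢ+bᵢ)/2 + t(bᵢ-aᵢ)/2, x_{i+1},…,xₙ)`. -/
theorem stmt_7 (n p : ℕ) (hn : 0 < n) (a b : Fin n → ℝ) (hab : ∀ i, a i < b i)
    (f : (Fin n → ℝ) → ℂ)
    (hf : ContinuousOn f (Set.univ.pi fun i => Icc (a i) (b i))) :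
    sSup ((fun x => ‖f x - tensorCheb n p a b f x‖) ''
        (Set.univ.pi fun i => Icc (a i) (b i))) ≤
      (1 + chebLebesgue p) * chebLebesgue p ^ (n - 1) *
        ∑ i : Fin n,
          sSup ((fun x : Fin n → ℝ =>
            sInf {r : ℝ | ∃ π : Polynomial ℂ, π.natDegree ≤ p ∧
              r = sSup ((fun t =>
                ‖f (Function.update x i (affMap (a i) (b i) t)) -
                  π.eval (t : ℂ)‖) '' Icc (-1 : ℝ) 1)}) ''
            (Set.univ.pi fun i => Icc (a i) (b i))) :=
  stmt_7_general n p a b hab f hf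
end
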